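/- Subsumption restricted to acyclic TFSs is well-founded: there is no infinite strictly decreasing sequence A₀ ⊐ A₁ ⊐ A₂ ⊐ ⋯ of acyclic TFSs. -/

import Mathlib

/-! Typed feature structures (TFSs), following Carpenter 1992.
`pathδ` extends the partial transition function `δ` to paths (lists of features). -/

variable {Nodes Feats Types : Type}

def pathδ (δ : Nodes → Feats → Option Nodes) : Nodes → List Feats → Option Nodes
  | q, [] => some q
  | q, f :: π => (δ q f).bind fun q' => pathδ δ q' π

/-- A typed feature structure: a finite set of nodes `Q`, a root, and a partial
transition function `δ : Q × Feats ⇀ Q` (modelled as `none` outside its domain,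
undefined outside `Q`), with every node reachable from the root. -/
structure TFS (Nodes Feats : Type) where
  Q : Finset Nodes
  root : Nodes
  root_mem : root ∈ Q
  δ : Nodes → Feats → Option Nodes
  dom : ∀ q f, (δ q f).isSome → q ∈ Q
  closed : ∀ q f q', δ q f = some q' → q' ∈ Q
  reach : ∀ q ∈ Q, ∃ π : List Feats, pathδ δ root π = some q

/-- The set of paths defined from the root of `A`. -/
def TFS.Pi (A : TFS Nodes Feats) : Set (List Feats) :=
  {π | (pathδ A.δ A.root π).isSome}

/-- `A` is cyclic if some node returns to itself along a nonempty path. -/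
def TFS.Cyclic (A : TFS Nodes Feats) : Prop :=
  ∃ q ∈ A.Q, ∃ α : List Feats, α ≠ [] ∧ pathδ A.δ q α = some q

def TFS.Acyclic (A : TFS Nodes Feats) : Prop := ¬ A.Cyclic

/-- A subsumption morphism from `A` to `B` w.r.t. the typing function `θ`:
maps root to root, maps `Q_A` into `Q_B`, is monotone on node types,
and commutes with the transition function. -/
def IsMorphism [PartialOrder Types] (θ : Nodes → Types)
    (A B : TFS Nodes Feats) (h : Nodes → Nodes) : Prop :=
  h A.root = B.root ∧ (∀ q ∈ A.Q, h q ∈ B.Q) ∧ (∀ q ∈ A.Q, θ q ≤ θ (h q)) ∧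
  ∀ q f q', A.δ q f = some q' → B.δ (h q) f = some (h q')

/-- `A` subsumes `B` iff some subsumption morphism from `A` to `B` exists. -/
def Subsumes [PartialOrder Types] (θ : Nodes → Types) (A B : TFS Nodes Feats) : Prop :=
  ∃ h, IsMorphism θ A B h

/-- Strict subsumption: `A ⊏ B` iff `A ⊑ B` and not `B ⊑ A`. -/
def StrictlySubsumes [PartialOrder Types] (θ : Nodes → Types) (A B : TFS Nodes Feats) : Prop :=
  Subsumes θ A B ∧ ¬ Subsumes θ B A

/-- `Θ(A)`: the sum over paths of the `r`-rank of the type of the node reached. -/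
noncomputable def Theta (r : Types → ℕ) (θ : Nodes → Types) (A : TFS Nodes Feats) : ℕ :=
  ∑ᶠ π ∈ A.Pi, (pathδ A.δ A.root π).elim 0 fun q => r (θ q)

/-- `rank(A) = |Π(A)| + Θ(A) + Δ(A)` where `Δ(A) = |Π(A)| − |Q_A|` (computed in `ℤ`). -/
noncomputable def rank (r : Types → ℕ) (θ : Nodes → Types) (A : TFS Nodes Feats) : ℤ :=
  (A.Pi.ncard : ℤ) + (Theta r θ A : ℤ) + ((A.Pi.ncard : ℤ) - (A.Q.card : ℤ))

/-! An acyclic TFS has only finitely many paths (a path longer than `|Q|` would revisit a node),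
so `rank` is a natural number. A subsumption morphism `h : A → B` carries every path of `A`
to a path of `B` and can only raise types, so `|Π|` and `Θ` grow weakly; `|Π| − |Q|` grows
weakly too, since every node of `B` outside `h(Q_A)` is reached by a path new to `B`.
If all three stay put, `h` is a type-preserving bijection `Q_A → Q_B` with `Π(A) = Π(B)`,
and its inverse is a morphism `B → A`. Hence `rank` strictly increases along `⊏`. -/

lemma pathδ_append (δ : Nodes → Feats → Option Nodes) (q : Nodes) (π₁ π₂ : List Feats) :
    pathδ δ q (π₁ ++ π₂) = (pathδ δ q π₁).bind fun p => pathδ δ p π₂ := by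
  induction π₁ generalizing q with
  | nil => simp [pathδ]
  | cons f π ih => simp [pathδ, ih, Option.bind_assoc]

namespace TFS

variable (A : TFS Nodes Feats)

lemma pathδ_mem {π : List Feats} {q p : Nodes} (hq : q ∈ A.Q)
    (hp : pathδ A.δ q π = some p) : p ∈ A.Q := by
  induction π generalizing q with
  | nil =>
    simp only [pathδ, Option.some.injEq] at hp
    exact hp ▸ hq
  | cons f π ih =>
    obtain ⟨q', hq', hp⟩ := Option.bind_eq_some_iff.mp hp
    exact ih (A.closed q f q' hq') hp

lemma mem_Pi_iff {π : List Feats} : π ∈ A.Pi ↔ ∃ p, pathδ A.δ A.root π = some p :=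
  Option.isSome_iff_exists

lemma take_mem_Pi {π : List Feats} (hπ : π ∈ A.Pi) (i : ℕ) : π.take i ∈ A.Pi := by
  rw [mem_Pi_iff] at hπ ⊢
  obtain ⟨p, hp⟩ := hπ
  rw [← List.take_append_drop i π, pathδ_append] at hp
  obtain ⟨q, hq, -⟩ := Option.bind_eq_some_iff.mp hp
  exact ⟨q, hq⟩

/-- The node reached by a path of `A`; the root serves as a junk value off `Π(A)`. -/
def node (π : List Feats) : Nodes :=
  (pathδ A.δ A.root π).getD A.root

variable {A}

lemma pathδ_root_eq_node {π : List Feats} (hπ : π ∈ A.Pi) :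
    pathδ A.δ A.root π = some (A.node π) := by
  obtain ⟨p, hp⟩ := A.mem_Pi_iff.mp hπ
  simp [node, hp]

lemma node_eq_of_pathδ {π : List Feats} {p : Nodes} (hp : pathδ A.δ A.root π = some p) :
    A.node π = p := by
  simp [node, hp]

lemma node_mem {π : List Feats} (hπ : π ∈ A.Pi) : A.node π ∈ A.Q :=
  A.pathδ_mem A.root_mem (pathδ_root_eq_node hπ)

lemma image_node_Pi : A.node '' A.Pi = A.Q := by
  refine Set.Subset.antisymm (Set.image_subset_iff.mpr fun π => node_mem) fun q hq => ?_
  obtain ⟨π, hπ⟩ := A.reach q hq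
  exact ⟨π, A.mem_Pi_iff.mpr ⟨q, hπ⟩, node_eq_of_pathδ hπ⟩

lemma card_Q_le_ncard_Pi (hfin : A.Pi.Finite) : A.Q.card ≤ A.Pi.ncard := by
  rw [← Set.ncard_coe_finset, ← image_node_Pi]
  exact Set.ncard_image_le hfin

lemma cyclic_of_node_take_eq {π : List Feats} (hπ : π ∈ A.Pi) {i j : ℕ} (hij : i < j)
    (hj : j ≤ π.length) (heq : A.node (π.take i) = A.node (π.take j)) : A.Cyclic := by
  have hi := A.take_mem_Pi hπ i
  refine ⟨A.node (π.take i), node_mem hi, (π.drop i).take (j - i), ?_, ?_⟩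
  · simp [List.drop_eq_nil_iff]
    omega
  · have htake : π.take j = π.take i ++ (π.drop i).take (j - i) := by
      rw [← List.take_add, Nat.add_sub_of_le hij.le]
    have hpath := pathδ_root_eq_node (A.take_mem_Pi hπ j)
    rwa [← heq, htake, pathδ_append, pathδ_root_eq_node hi, Option.bind_some] at hpath

lemma Acyclic.length_lt_card (hA : A.Acyclic) {π : List Feats} (hπ : π ∈ A.Pi) :
    π.length < A.Q.card := by
  have hinj : Set.InjOn (fun i => A.node (π.take i)) ↑(Finset.range (π.length + 1)) := by
    intro i hi j hj heq
    simp only [Finset.coe_range, Set.mem_Iio] at hi hj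
    by_contra hne
    rcases Nat.lt_or_gt_of_ne hne with hij | hji
    · exact hA (cyclic_of_node_take_eq hπ hij (by omega) heq)
    · exact hA (cyclic_of_node_take_eq hπ hji (by omega) heq.symm)
  have := Finset.card_le_card_of_injOn _ (fun i _ => node_mem (A.take_mem_Pi hπ i)) hinj
  simpa using this

lemma Acyclic.finite_Pi [Finite Feats] (hA : A.Acyclic) : A.Pi.Finite :=
  (List.finite_length_lt Feats A.Q.card).subset fun _ hπ => hA.length_lt_card hπ

def typeRankAt (r : Types → ℕ) (θ : Nodes → Types) (π : List Feats) : ℕ :=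
  (pathδ A.δ A.root π).elim 0 fun q => r (θ q)

lemma Theta_eq_sum {r : Types → ℕ} {θ : Nodes → Types} {s : Finset (List Feats)}
    (hs : A.Pi ⊆ s) : Theta r θ A = ∑ π ∈ s, A.typeRankAt r θ π := by
  have hfin : A.Pi.Finite := s.finite_toSet.subset hs
  rw [Theta, finsum_mem_eq_finite_toFinset_sum _ hfin]
  refine Finset.sum_subset (fun π hπ => hs (hfin.mem_toFinset.mp hπ)) fun π _ hπ => ?_
  have hnone : pathδ A.δ A.root π = none := by
    simpa [TFS.Pi] using (hfin.mem_toFinset.not.mp hπ)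
  simp [hnone]

end TFS

namespace IsMorphism

variable [PartialOrder Types] {θ : Nodes → Types} {A B : TFS Nodes Feats} {h : Nodes → Nodes}

lemma pathδ_map (hm : IsMorphism θ A B h) {π : List Feats} {q p : Nodes}
    (hp : pathδ A.δ q π = some p) : pathδ B.δ (h q) π = some (h p) := by
  induction π generalizing q with
  | nil => simp_all [pathδ]
  | cons f π ih =>
    obtain ⟨q', hq', hp⟩ := Option.bind_eq_some_iff.mp hp
    simp [pathδ, hm.2.2.2 q f q' hq', ih hp]

lemma pathδ_root (hm : IsMorphism θ A B h) {π : List Feats} {p : Nodes}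
    (hp : pathδ A.δ A.root π = some p) : pathδ B.δ B.root π = some (h p) :=
  hm.1 ▸ hm.pathδ_map hp

lemma Pi_subset (hm : IsMorphism θ A B h) : A.Pi ⊆ B.Pi := fun _ hπ =>
  B.mem_Pi_iff.mpr ⟨_, hm.pathδ_root (TFS.pathδ_root_eq_node hπ)⟩

lemma node_eq (hm : IsMorphism θ A B h) {π : List Feats} (hπ : π ∈ A.Pi) :
    B.node π = h (A.node π) :=
  TFS.node_eq_of_pathδ (hm.pathδ_root (TFS.pathδ_root_eq_node hπ))

lemma typeRankAt_le (hm : IsMorphism θ A B h) {r : Types → ℕ} (hr : Monotone r)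
    (π : List Feats) : A.typeRankAt r θ π ≤ B.typeRankAt r θ π := by
  cases hp : pathδ A.δ A.root π with
  | none => simp [TFS.typeRankAt, hp]
  | some p =>
    simpa [TFS.typeRankAt, hp, hm.pathδ_root hp] using
      hr (hm.2.2.1 p (A.pathδ_mem A.root_mem hp))

lemma Theta_le (hm : IsMorphism θ A B h) {r : Types → ℕ} (hr : Monotone r)
    (hfin : B.Pi.Finite) : Theta r θ A ≤ Theta r θ B := by
  rw [A.Theta_eq_sum (s := hfin.toFinset) (by simpa using hm.Pi_subset),
    B.Theta_eq_sum (s := hfin.toFinset) (by simp)]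
  exact Finset.sum_le_sum fun π _ => hm.typeRankAt_le hr π

/-- Every node of `B` outside `h(Q_A)` is reached by a path of `B` that is not a path of `A`. -/
lemma ncard_Pi_add_card_Q_le (hm : IsMorphism θ A B h) (hfin : B.Pi.Finite) :
    A.Pi.ncard + B.Q.card ≤ B.Pi.ncard + A.Q.card := by
  have hcover : (B.Q : Set Nodes) ⊆ h '' A.Q ∪ B.node '' (B.Pi \ A.Pi) := by
    rw [← B.image_node_Pi]
    rintro _ ⟨π, hπ, rfl⟩
    by_cases hπA : π ∈ A.Pi
    · exact Or.inl ⟨A.node π, TFS.node_mem hπA, (hm.node_eq hπA).symm⟩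
    · exact Or.inr ⟨π, ⟨hπ, hπA⟩, rfl⟩
  have hQ : B.Q.card ≤ A.Q.card + (B.Pi \ A.Pi).ncard := calc
    B.Q.card = (B.Q : Set Nodes).ncard := (Set.ncard_coe_finset _).symm
    _ ≤ (h '' A.Q ∪ B.node '' (B.Pi \ A.Pi)).ncard :=
      Set.ncard_le_ncard hcover ((A.Q.finite_toSet.image h).union (hfin.sdiff.image _))
    _ ≤ (h '' A.Q).ncard + (B.node '' (B.Pi \ A.Pi)).ncard := Set.ncard_union_le _ _
    _ ≤ A.Q.card + (B.Pi \ A.Pi).ncard := by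
      gcongr
      · simpa using Set.ncard_image_le (f := h) A.Q.finite_toSet
      · exact Set.ncard_image_le hfin.sdiff
  have := Set.ncard_sdiff_add_ncard_of_subset hm.Pi_subset hfin
  omega

lemma type_eq_of_Theta_eq (hm : IsMorphism θ A B h) {r : Types → ℕ} (hr : StrictMono r)
    (hfin : B.Pi.Finite) (hΘ : Theta r θ A = Theta r θ B) : ∀ p ∈ A.Q, θ (h p) = θ p := by
  rw [A.Theta_eq_sum (s := hfin.toFinset) (by simpa using hm.Pi_subset),
    B.Theta_eq_sum (s := hfin.toFinset) (by simp),
    Finset.sum_eq_sum_iff_of_le fun π _ => hm.typeRankAt_le hr.monotone π] at hΘ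
  intro p hp
  obtain ⟨π, hπ⟩ := A.reach p hp
  have hrank := hΘ π (by simpa using hm.Pi_subset (A.mem_Pi_iff.mpr ⟨p, hπ⟩))
  simp only [TFS.typeRankAt, hπ, hm.pathδ_root hπ, Option.elim_some] at hrank
  by_contra hne
  exact (hr (lt_of_le_of_ne (hm.2.2.1 p hp) (Ne.symm hne))).ne hrank

lemma image_Q_eq (hm : IsMorphism θ A B h) (hPi : B.Pi ⊆ A.Pi) : h '' A.Q = B.Q := by
  refine Set.Subset.antisymm (Set.image_subset_iff.mpr hm.2.1) fun q hq => ?_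
  obtain ⟨π, hπ⟩ := B.reach q hq
  obtain ⟨p, hp⟩ := A.mem_Pi_iff.mp (hPi (B.mem_Pi_iff.mpr ⟨q, hπ⟩))
  refine ⟨p, A.pathδ_mem A.root_mem hp, ?_⟩
  simpa [hπ] using (hm.pathδ_root hp).symm

/-- `Π(B) ⊆ Π(A)` makes `δ_A` defined wherever `δ_B` is, so the inverse of `h` commutes with
transitions. -/
lemma subsumes_symm (hm : IsMorphism θ A B h) (hinj : Set.InjOn h A.Q) (hPi : B.Pi ⊆ A.Pi)
    (hθ : ∀ p ∈ A.Q, θ (h p) = θ p) : Subsumes θ B A := by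
  have : Nonempty Nodes := ⟨A.root⟩
  set g := Function.invFunOn h A.Q
  have hgh : ∀ p ∈ A.Q, g (h p) = p := fun p hp => hinj.leftInvOn_invFunOn hp
  have hg : ∀ q ∈ B.Q, g q ∈ A.Q ∧ h (g q) = q := by
    intro q hq
    have hex : q ∈ h '' A.Q := by
      rw [hm.image_Q_eq hPi]
      exact hq
    exact ⟨Function.invFunOn_mem hex, Function.invFunOn_eq hex⟩
  refine ⟨g, hm.1 ▸ hgh A.root A.root_mem, fun q hq => (hg q hq).1, fun q hq => ?_,
    fun q f q' hq' => ?_⟩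
  · obtain ⟨hgq, hhgq⟩ := hg q hq
    exact (hhgq ▸ hθ (g q) hgq).le
  · obtain ⟨hgq, hhgq⟩ := hg q (B.dom q f (by simp [hq']))
    obtain ⟨π, hπ⟩ := A.reach (g q) hgq
    have hBpath : pathδ B.δ B.root (π ++ [f]) = some q' := by
      simp [pathδ_append, hm.pathδ_root hπ, hhgq, pathδ, hq']
    obtain ⟨p', hp'⟩ := A.mem_Pi_iff.mp (hPi (B.mem_Pi_iff.mpr ⟨q', hBpath⟩))
    rw [pathδ_append, hπ, Option.bind_some] at hp'
    obtain ⟨p'', hδA, hp''⟩ := Option.bind_eq_some_iff.mp hp'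
    have hhp'' : h p'' = q' := by
      simpa [hhgq, hq'] using (hm.2.2.2 (g q) f p'' hδA).symm
    rw [← hhp'', hgh p'' (A.closed _ f p'' hδA), hδA]

end IsMorphism

lemma rank_nonneg [Finite Feats] (r : Types → ℕ) (θ : Nodes → Types) {A : TFS Nodes Feats}
    (hA : A.Acyclic) : 0 ≤ rank r θ A := by
  have := A.card_Q_le_ncard_Pi hA.finite_Pi
  simp only [rank]
  omega

lemma rank_lt_of_strictlySubsumes [Finite Feats] [PartialOrder Types] {r : Types → ℕ}
    (hr : StrictMono r) {θ : Nodes → Types} {A B : TFS Nodes Feats} (hB : B.Acyclic)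
    (hAB : StrictlySubsumes θ A B) : rank r θ A < rank r θ B := by
  obtain ⟨⟨h, hm⟩, hBA⟩ := hAB
  have hfin := hB.finite_Pi
  have hncard := Set.ncard_le_ncard hm.Pi_subset hfin
  have hΘ := hm.Theta_le hr.monotone hfin
  have hΔ := hm.ncard_Pi_add_card_Q_le hfin
  by_contra hle
  simp only [rank, not_lt] at hle
  have hPi_eq : A.Pi = B.Pi := Set.eq_of_subset_of_ncard_le hm.Pi_subset (by omega) hfin
  have hinj : Set.InjOn h A.Q := by
    refine Set.injOn_of_ncard_image_eq ?_ A.Q.finite_toSet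
    rw [hm.image_Q_eq hPi_eq.ge, Set.ncard_coe_finset, Set.ncard_coe_finset]
    omega
  exact hBA (hm.subsumes_symm hinj hPi_eq.ge (hm.type_eq_of_Theta_eq hr hfin (by omega)))

/-- Subsumption of acyclic TFSs is well-founded: there is no infinite
strictly decreasing sequence `A₀ ⊐ A₁ ⊐ A₂ ⊐ ⋯` of acyclic TFSs. -/
theorem acyclic_subsumption_well_founded [Finite Feats] [PartialOrder Types]
    (r : Types → ℕ) (hr : ∀ t t' : Types, t < t' → r t < r t')
    (θ : Nodes → Types) :
    ¬ ∃ A : ℕ → TFS Nodes Feats,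
      (∀ i, (A i).Acyclic) ∧ ∀ i, StrictlySubsumes θ (A (i + 1)) (A i) := by
  rintro ⟨A, hac, hdec⟩
  have hrank : ∀ i, rank r θ (A (i + 1)) < rank r θ (A i) := fun i =>
    rank_lt_of_strictlySubsumes (fun _ _ => hr _ _) (hac i) (hdec i)
  refine not_strictAnti_of_wellFoundedLT (fun i => (rank r θ (A i)).toNat)
    (strictAnti_nat_of_succ_lt fun i => ?_)
  exact (Int.toNat_lt_toNat ((rank_nonneg r θ (hac (i + 1))).trans_lt (hrank i))).mpr (hrank i)
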